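/- Let N ≥ 2, p > 1, p' = p/(p-1), and c, β > 0. Suppose that for every ε ∈ (0, 1/2) there is u_ε ∈ C_c^∞(B_2), u_ε ≢ 0, with u_ε ≥ log(1/(2ε)) on B_{2ε} \ B_ε and ‖f_ε‖_{L^p}^p ≤ (1+δ)^{p/p'}·c^{p/2}·ω_{N-1}·log(1/(2ε)) for a given δ > 0 and all small ε, where f_ε is the relevant derivative of u_ε. If additionally ∫_{B_2} exp(β·(|u_ε(x)|/‖f_ε‖_{L^p})^{p'}) dx ≤ A·|B_2| for all such ε with A independent of ε, then β ≤ N·(1+δ)·c^{p'/2}·ω_{N-1}^{p'/p}. -/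

import Mathlib

open Real MeasureTheory Filter

noncomputable section

/-- The surface area of the unit sphere in `ℝ^N`: `ω_{N-1} = 2π^(N/2)/Γ(N/2)`. -/
def sphereArea (N : ℕ) : ℝ :=
  2 * Real.pi ^ ((N : ℝ) / 2) / Real.Gamma ((N : ℝ) / 2)

set_option maxHeartbeats 1000000 in
theorem optimality_step (N : ℕ) (hN : 2 ≤ N)
    (p : ℝ) (hp : 1 < p) (p' : ℝ) (hp' : p' = p / (p - 1))
    (c β δ A : ℝ) (hc : 0 < c) (hβ : 0 < β) (hδ : 0 < δ)
    (u : ℝ → EuclideanSpace ℝ (Fin N) → ℝ) (M : ℝ → ℝ)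
    (ε₀ : ℝ) (hε₀ : 0 < ε₀) (hε₀' : ε₀ < 1 / 2)
    (hreg : ∀ ε : ℝ, 0 < ε → ε < ε₀ →
      ContDiff ℝ (⊤ : ℕ∞) (u ε) ∧ HasCompactSupport (u ε) ∧
        tsupport (u ε) ⊆ Metric.ball (0 : EuclideanSpace ℝ (Fin N)) 2 ∧ u ε ≠ 0)
    (hM : ∀ ε : ℝ, 0 < ε → ε < ε₀ → 0 < M ε)
    (hlow : ∀ ε : ℝ, 0 < ε → ε < ε₀ → ∀ x : EuclideanSpace ℝ (Fin N),
      ε ≤ ‖x‖ → ‖x‖ ≤ 2 * ε → Real.log (1 / (2 * ε)) ≤ u ε x)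
    (hnorm : ∀ ε : ℝ, 0 < ε → ε < ε₀ →
      (M ε) ^ p ≤ (1 + δ) ^ (p / p') * c ^ (p / 2) * sphereArea N * Real.log (1 / (2 * ε)))
    (hintInt : ∀ ε : ℝ, 0 < ε → ε < ε₀ →
      IntegrableOn (fun x => Real.exp (β * (|u ε x| / M ε) ^ p'))
        (Metric.ball (0 : EuclideanSpace ℝ (Fin N)) 2))
    (hint : ∀ ε : ℝ, 0 < ε → ε < ε₀ →
      ∫ x in Metric.ball (0 : EuclideanSpace ℝ (Fin N)) 2,
          Real.exp (β * (|u ε x| / M ε) ^ p')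
        ≤ A * (volume (Metric.ball (0 : EuclideanSpace ℝ (Fin N)) 2)).toReal) :
    β ≤ N * (1 + δ) * c ^ (p' / 2) * (sphereArea N) ^ (p' / p) := by
  haveI : Nontrivial (EuclideanSpace ℝ (Fin N)) :=
    Module.nontrivial_of_finrank_pos (R := ℝ)
      (by rw [finrank_euclideanSpace_fin]; omega)
  have hp0 : (0 : ℝ) < p := lt_trans one_pos hp
  have hp1 : (0 : ℝ) < p - 1 := by linarith
  have hp'pos : 0 < p' := by rw [hp']; positivity
  have hω : 0 < sphereArea N := by
    have h2 : (0 : ℝ) < (N : ℝ) / 2 := by positivity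
    have := Real.Gamma_pos_of_pos h2
    unfold sphereArea
    positivity
  have hδ1 : (0 : ℝ) < 1 + δ := by linarith
  set ω := sphereArea N with hωdef
  set K := (1 + δ) * c ^ (p' / 2) * ω ^ (p' / p) with hKdef
  have hK : 0 < K := by positivity
  set C := (1 + δ) ^ (p / p') * c ^ (p / 2) * ω with hCdef
  have hC : 0 < C := by positivity
  have hpp' : p / p' * (p' / p) = 1 := by
    field_simp
  have hCK : C ^ (p' / p) = K := by
    have e2 : p / 2 * (p' / p) = p' / 2 := by field_simp
    rw [hCdef, hKdef, Real.mul_rpow (by positivity) hω.le,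
      Real.mul_rpow (by positivity) (by positivity),
      ← Real.rpow_mul hδ1.le, ← Real.rpow_mul hc.le, hpp', e2, Real.rpow_one]
  -- contradiction setup
  by_contra hcon
  push_neg at hcon
  have hβK : N * K < β := by
    calc (N : ℝ) * K = N * (1 + δ) * c ^ (p' / 2) * ω ^ (p' / p) := by ring
    _ < β := hcon
  set t := β / K with htdef
  have ht : (N : ℝ) < t := by
    rw [htdef, lt_div_iff₀ hK]; linarith
  set s := t - N with hsdef
  have hs : 0 < s := by rw [hsdef]; linarith
  -- volume facts
  have hV1 : 0 < (volume (Metric.ball (0 : EuclideanSpace ℝ (Fin N)) 1)).toReal :=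
    ENNReal.toReal_pos (ne_of_gt (Metric.measure_ball_pos _ _ one_pos))
      measure_ball_lt_top.ne
  set V1 := (volume (Metric.ball (0 : EuclideanSpace ℝ (Fin N)) 1)).toReal with hV1def
  set V2 := (volume (Metric.ball (0 : EuclideanSpace ℝ (Fin N)) 2)).toReal with hV2def
  set D := 2 ^ (-(N : ℝ)) * 2 ^ (-t) * V1 with hDdef
  have hD : 0 < D := by positivity
  -- key estimate for each ε
  have key : ∀ ε : ℝ, 0 < ε → ε < ε₀ → D * ε ^ (-s) ≤ A * V2 := by
    intro ε hε hεε
    have hε12 : ε < 1 / 2 := lt_trans hεε hε₀'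
    have h2ε : (0 : ℝ) < 2 * ε := by linarith
    have h2εinv : (0 : ℝ) < 1 / (2 * ε) := by positivity
    have h2ε1 : 2 * ε < 1 := by linarith
    have hL : 0 < Real.log (1 / (2 * ε)) := by
      apply Real.log_pos
      rw [lt_div_iff₀ h2ε]; linarith
    set L := Real.log (1 / (2 * ε)) with hLdef
    -- the small ball inside the annulus
    set x₀ : EuclideanSpace ℝ (Fin N) := (3 * ε / 2) • (EuclideanSpace.single (⟨0, by omega⟩ : Fin N) (1 : ℝ)) with hx₀
    have hx₀norm : ‖x₀‖ = 3 * ε / 2 := by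
      rw [hx₀, norm_smul, EuclideanSpace.norm_single]
      rw [Real.norm_eq_abs, abs_of_pos (by linarith), norm_one, mul_one]
    set S := Metric.ball x₀ (ε / 2) with hSdef
    have hSsub : ∀ x ∈ S, ε ≤ ‖x‖ ∧ ‖x‖ ≤ 2 * ε := by
      intro x hx
      rw [hSdef, Metric.mem_ball, dist_eq_norm] at hx
      have h2 : ‖x‖ ≤ ‖x - x₀‖ + ‖x₀‖ := by
        simpa using norm_add_le (x - x₀) x₀
      have h3 : ‖x₀‖ - ‖x - x₀‖ ≤ ‖x‖ := by
        have := norm_sub_norm_le x₀ x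
        rw [norm_sub_rev] at this
        linarith
      constructor
      · rw [hx₀norm] at h3; linarith
      · rw [hx₀norm] at h2; linarith
    have hSball : S ⊆ Metric.ball (0 : EuclideanSpace ℝ (Fin N)) 2 := by
      intro x hx
      rw [Metric.mem_ball, dist_zero_right]
      have := (hSsub x hx).2
      linarith
    -- pointwise lower bound on S
    have hMε := hM ε hε hεε
    have hCL : (0 : ℝ) < C * L := by positivity
    have hCLp : (0 : ℝ) < (C * L) ^ (1 / p) := Real.rpow_pos_of_pos hCL _
    have hMle : M ε ≤ (C * L) ^ (1 / p) := by
      have h1 : (M ε) ^ p ≤ C * L := by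
        have h := hnorm ε hε hεε
        calc (M ε) ^ p ≤ (1 + δ) ^ (p / p') * c ^ (p / 2) * ω * L := h
        _ = C * L := by rw [hCdef]
      have h2 := Real.rpow_le_rpow (Real.rpow_nonneg hMε.le p) h1
        (by positivity : (0 : ℝ) ≤ 1 / p)
      rwa [← Real.rpow_mul hMε.le, mul_one_div, div_self hp0.ne', Real.rpow_one] at h2
    have hptw : ∀ x ∈ S, Real.exp (L * t) ≤ Real.exp (β * (|u ε x| / M ε) ^ p') := by
      intro x hx
      obtain ⟨hx1, hx2⟩ := hSsub x hx
      have hub : L ≤ |u ε x| := le_trans (hlow ε hε hεε x hx1 hx2) (le_abs_self _)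
      have hdiv : L / (C * L) ^ (1 / p) ≤ |u ε x| / M ε :=
        div_le_div₀ (abs_nonneg _) hub hMε hMle
      have hrp : (L / (C * L) ^ (1 / p)) ^ p' ≤ (|u ε x| / M ε) ^ p' :=
        Real.rpow_le_rpow (by positivity) hdiv hp'pos.le
      have hval : (L / (C * L) ^ (1 / p)) ^ p' = L / K := by
        rw [Real.div_rpow hL.le (Real.rpow_nonneg hCL.le _),
          ← Real.rpow_mul hCL.le]
        have h1 : 1 / p * p' = p' / p := by ring
        rw [h1, Real.mul_rpow hC.le hL.le, hCK]
        have hsum : p' = 1 + p' / p := by rw [hp']; field_simp; ring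
        have hLpow : L ^ p' = L * L ^ (p' / p) := by
          nth_rewrite 1 [hsum]
          rw [Real.rpow_add hL, Real.rpow_one]
        rw [div_eq_div_iff (by positivity) hK.ne', hLpow]
        ring
      have hfin : L * t ≤ β * (|u ε x| / M ε) ^ p' := by
        have h1 : L * t = β * (L / K) := by
          rw [htdef]; field_simp
        rw [h1]
        exact mul_le_mul_of_nonneg_left (hval ▸ hrp) hβ.le
      exact Real.exp_le_exp.mpr hfin
    -- integral lower bound
    have hIntBall := hintInt ε hε hεε
    have hIntS : IntegrableOn (fun x => Real.exp (β * (|u ε x| / M ε) ^ p')) S :=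
      hIntBall.mono_set hSball
    have hconst : Real.exp (L * t) * (volume S).toReal
        ≤ ∫ x in S, Real.exp (β * (|u ε x| / M ε) ^ p') :=
      setIntegral_ge_of_const_le_real measurableSet_ball measure_ball_lt_top.ne hptw hIntS
    have hmono : (∫ x in S, Real.exp (β * (|u ε x| / M ε) ^ p'))
        ≤ ∫ x in Metric.ball (0 : EuclideanSpace ℝ (Fin N)) 2, Real.exp (β * (|u ε x| / M ε) ^ p') :=
      setIntegral_mono_set hIntBall
        (Filter.Eventually.of_forall fun x => (Real.exp_pos _).le)
        (HasSubset.Subset.eventuallyLE hSball)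
    have hchain : Real.exp (L * t) * (volume S).toReal ≤ A * V2 :=
      le_trans hconst (le_trans hmono (hint ε hε hεε))
    -- identify the left-hand side
    have hvol : (volume S).toReal = (ε / 2) ^ N * V1 := by
      rw [hSdef, Measure.addHaar_ball (volume : Measure (EuclideanSpace ℝ (Fin N))) x₀ (by positivity : (0:ℝ) ≤ ε / 2),
        ENNReal.toReal_mul, ENNReal.toReal_ofReal (by positivity),
        finrank_euclideanSpace_fin]
    have hexp : Real.exp (L * t) = 2 ^ (-t) * ε ^ (-t) := by
      have h1 : Real.exp (L * t) = (1 / (2 * ε)) ^ t :=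
        (Real.rpow_def_of_pos h2εinv t).symm
      rw [h1, one_div, Real.inv_rpow h2ε.le, ← Real.rpow_neg h2ε.le,
        Real.mul_rpow (by norm_num : (0:ℝ) ≤ 2) hε.le]
    have hpow : ((ε / 2 : ℝ)) ^ N = ε ^ ((N : ℝ)) * 2 ^ (-(N : ℝ)) := by
      rw [div_pow, div_eq_mul_inv, ← Real.rpow_natCast ε N, ← Real.rpow_natCast 2 N,
        ← Real.rpow_neg (by norm_num : (0:ℝ) ≤ 2)]
    have heps : ε ^ ((N : ℝ)) * ε ^ (-t) = ε ^ (-s) := by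
      rw [← Real.rpow_add hε]
      congr 1
      rw [hsdef]; ring
    calc D * ε ^ (-s) = D * (ε ^ ((N : ℝ)) * ε ^ (-t)) := by rw [heps]
    _ = (2 ^ (-t) * ε ^ (-t)) * ((ε ^ ((N : ℝ)) * 2 ^ (-(N : ℝ))) * V1) := by
        rw [hDdef]; ring
    _ = Real.exp (L * t) * (volume S).toReal := by rw [hexp, hvol, hpow]
    _ ≤ A * V2 := hchain
  -- take ε → 0⁺ to get a contradiction
  have hlim : Tendsto (fun ε : ℝ => ε ^ (-s)) (nhdsWithin 0 (Set.Ioi 0)) atTop := by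
    have h1 : Tendsto (fun x : ℝ => x ^ s) atTop atTop := tendsto_rpow_atTop hs
    refine (h1.comp tendsto_inv_nhdsGT_zero).congr' ?_
    filter_upwards [self_mem_nhdsWithin] with ε (hε : ε ∈ Set.Ioi 0)
    have hε0 : (0:ℝ) < ε := hε
    simp only [Function.comp_apply]
    rw [Real.inv_rpow hε0.le, ← Real.rpow_neg hε0.le]
  have hev1 : ∀ᶠ ε in nhdsWithin (0:ℝ) (Set.Ioi 0), A * V2 / D < ε ^ (-s) :=
    hlim.eventually_gt_atTop _
  have hev2 : ∀ᶠ ε in nhdsWithin (0:ℝ) (Set.Ioi 0), ε < ε₀ := by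
    filter_upwards [Ioo_mem_nhdsGT_of_mem (Set.mem_Ico.mpr ⟨le_refl 0, hε₀⟩)] with ε hε
    exact hε.2
  have hev3 : ∀ᶠ ε in nhdsWithin (0:ℝ) (Set.Ioi 0), 0 < ε := by
    filter_upwards [self_mem_nhdsWithin] with ε hε
    exact hε
  obtain ⟨ε, h1, h2, h3⟩ := (hev1.and (hev2.and hev3)).exists
  have hk := key ε h3 h2
  have : A * V2 < D * ε ^ (-s) := by
    rw [div_lt_iff₀ hD] at h1
    linarith [h1]
  linarith
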